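/- arXiv:2604.12415 — 3 statements merged into one kernel-verified Lean document; each statement's English description precedes it below -/
import Mathlib

section
/- Let b = 3π/2 and q = 1/((1+b²) sinh 1), and let k be the Green's function k(t,s) = (1/sinh 1)·cosh(1−max(t,s))cosh(min(t,s)). Then for every t ∈ [0, 2/3], ∫₀^{2/3} k(t,s) sin(bs) ds = q sin(bt) sinh(1) + q b (cosh(1−t) + cosh(1/3) cosh(t)). -/
/-! Splitting the range of integration at `s = t` turns the Green's function into the product
`cosh (1 - t) cosh s` on `[0, t]` and `cosh t cosh (1 - s)` on `[t, 2/3]`. Both pieces are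
integrated with the elementary primitive of `cosh (s - a) sin (b s)`, and since `b · 2/3 = π`
the contribution of the upper endpoint is `b cosh (1/3)`. The remaining terms recombine through
`sinh t cosh (1 - t) + cosh t sinh (1 - t) = sinh 1`, while the `cos (b t)` terms cancel. -/

open Real Set intervalIntegral

theorem integral_max_mul_min_mul {g h f : ℝ → ℝ} (hg : Continuous g) (hh : Continuous h)
    (hf : Continuous f) {x t y : ℝ} (hxt : x ≤ t) (hty : t ≤ y) :
    ∫ s in x..y, g (max t s) * h (min t s) * f s =
      g t * (∫ s in x..t, h s * f s) + h t * ∫ s in t..y, g s * f s := by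
  have hcont : Continuous fun s => g (max t s) * h (min t s) * f s := by fun_prop
  rw [← integral_add_adjacent_intervals (hcont.intervalIntegrable x t)
    (hcont.intervalIntegrable t y), ← integral_const_mul, ← integral_const_mul]
  congr 1
  · refine integral_congr fun s hs => ?_
    rw [uIcc_of_le hxt] at hs
    simp only [max_eq_left hs.2, min_eq_right hs.2]
    ring
  · refine integral_congr fun s hs => ?_
    rw [uIcc_of_le hty] at hs
    simp only [max_eq_right hs.1, min_eq_left hs.1]
    ring

theorem hasDerivAt_sinh_sub_mul_sin_sub_cosh_sub_mul_cos (a b x : ℝ) :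
    HasDerivAt (fun s => sinh (s - a) * sin (b * s) - b * (cosh (s - a) * cos (b * s)))
      ((1 + b ^ 2) * (cosh (x - a) * sin (b * x))) x := by
  have hlin : HasDerivAt (fun s : ℝ => b * s) b x := by
    simpa using (hasDerivAt_id x).const_mul b
  have hshift : HasDerivAt (fun s : ℝ => s - a) 1 x := (hasDerivAt_id x).sub_const a
  have h : HasDerivAt (fun s => sinh (s - a) * sin (b * s) - b * (cosh (s - a) * cos (b * s))) _ x :=
    (hshift.sinh.mul hlin.sin).sub ((hshift.cosh.mul hlin.cos).const_mul b)
  convert h using 1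
  ring

theorem integral_cosh_sub_mul_sin (a b x y : ℝ) :
    ∫ s in x..y, cosh (s - a) * sin (b * s) =
      ((sinh (y - a) * sin (b * y) - b * (cosh (y - a) * cos (b * y))) -
        (sinh (x - a) * sin (b * x) - b * (cosh (x - a) * cos (b * x)))) / (1 + b ^ 2) := by
  have hb : 1 + b ^ 2 ≠ 0 := by positivity
  rw [eq_div_iff hb, mul_comm, ← integral_const_mul]
  exact integral_eq_sub_of_hasDerivAt
    (fun s _ => hasDerivAt_sinh_sub_mul_sin_sub_cosh_sub_mul_cos a b s)
    ((by fun_prop : Continuous fun s => (1 + b ^ 2) * (cosh (s - a) * sin (b * s))).intervalIntegrable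
      x y)

theorem stmt_3 (b q : ℝ) (hb : b = 3 * π / 2) (hq : q = 1 / ((1 + b ^ 2) * Real.sinh 1))
    (k : ℝ → ℝ → ℝ)
    (hk : ∀ t s, k t s = (1 / Real.sinh 1) * Real.cosh (1 - max t s) * Real.cosh (min t s)) :
    ∀ t ∈ Icc (0:ℝ) (2 / 3),
      ∫ s in (0:ℝ)..(2 / 3), k t s * Real.sin (b * s) =
        q * Real.sin (b * t) * Real.sinh 1 +
          q * b * (Real.cosh (1 - t) + Real.cosh (1 / 3) * Real.cosh t) := by
  rintro t ⟨ht0, ht1⟩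
  have hcosh_comm (u : ℝ) : cosh (1 - u) = cosh (u - 1) := by rw [← cosh_neg, neg_sub]
  have hkernel : ∀ s, k t s * sin (b * s) =
      1 / sinh 1 * (cosh (max t s - 1) * cosh (min t s) * sin (b * s)) := by
    intro s; rw [hk, hcosh_comm]; ring
  have hbπ : b * (2 / 3) = π := by rw [hb]; ring
  have hsinh_one : sinh 1 = sinh t * cosh (1 - t) + cosh t * sinh (1 - t) := by
    rw [← sinh_add, add_sub_cancel]
  have hleft : ∫ s in (0 : ℝ)..t, cosh s * sin (b * s) =
      (sinh t * sin (b * t) - b * (cosh t * cos (b * t)) + b) / (1 + b ^ 2) := by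
    simpa [sub_add] using integral_cosh_sub_mul_sin 0 b 0 t
  have hright : ∫ s in t..(2 / 3 : ℝ), cosh (s - 1) * sin (b * s) =
      (b * cosh (1 / 3) - (sinh (t - 1) * sin (b * t) - b * (cosh (t - 1) * cos (b * t)))) /
        (1 + b ^ 2) := by
    rw [integral_cosh_sub_mul_sin, hbπ, sin_pi, cos_pi, show (2 / 3 : ℝ) - 1 = -(1 / 3) by norm_num,
      cosh_neg]
    ring
  simp_rw [hkernel, integral_const_mul]
  rw [integral_max_mul_min_mul (g := fun u => cosh (u - 1)) (by fun_prop) continuous_cosh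
    (by fun_prop) ht0 ht1, hleft, hright, ← hcosh_comm, ← neg_sub 1 t, sinh_neg, hq]
  field_simp
  rw [hsinh_one]
  ring
end

section
/- With b = 3π/2, q = 1/((1+b²) sinh 1), B(t) := −q b cosh(1/3) cosh(t) and D(t) := q(sinh(1) sin(bt) − b cosh(2/3) cosh(1−t)), one has B(x) < 0 for every x ∈ [0, 2/3] and D(y) < 0 for every y ∈ [2/3, 1]. -/
open Real Set

/-! Both functions are negative for all real arguments: `B` is minus a product of positive
factors, and in `D` the term `sinh 1 * sin (b t)` is at most `sinh 1 < 2 < b`, while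
`b * cosh (2/3) * cosh (1 - t) ≥ b` since `cosh ≥ 1`. -/

lemma Real.sinh_one_lt_two : sinh 1 < 2 := by
  have he := exp_one_lt_d9
  have hinv := exp_pos (-1)
  rw [sinh_eq]
  linarith

lemma Real.mul_sin_lt_mul_cosh_mul_cosh {a b : ℝ} (ha : 0 ≤ a) (hab : a < b) (x u v : ℝ) :
    a * sin x < b * cosh u * cosh v :=
  calc a * sin x ≤ a := mul_le_of_le_one_right ha (sin_le_one x)
    _ < b := hab
    _ = b * 1 * 1 := by ring
    _ ≤ b * cosh u * cosh v := by
      have hb : 0 ≤ b := ha.trans hab.le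
      gcongr
      · exact one_le_cosh u
      · exact one_le_cosh v

theorem stmt_7 (b q : ℝ) (hb : b = 3 * π / 2) (hq : q = 1 / ((1 + b ^ 2) * Real.sinh 1))
    (B D : ℝ → ℝ)
    (hB : ∀ t, B t = -(q * b * Real.cosh (1 / 3) * Real.cosh t))
    (hD : ∀ t, D t = q * (Real.sinh 1 * Real.sin (b * t) - b * Real.cosh (2 / 3) * Real.cosh (1 - t))) :
    (∀ x ∈ Icc (0:ℝ) (2 / 3), B x < 0) ∧ (∀ y ∈ Icc (2 / 3 : ℝ) 1, D y < 0) := by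
  have hb_pos : 0 < b := by rw [hb]; positivity
  have hsinh_pos : 0 < sinh 1 := sinh_pos_iff.mpr one_pos
  have hq_pos : 0 < q := by rw [hq]; positivity
  have hsinh_lt_b : sinh 1 < b := by linarith [sinh_one_lt_two, pi_gt_three]
  refine ⟨fun x _ => ?_, fun y _ => ?_⟩
  · rw [hB, neg_lt_zero]
    positivity
  · rw [hD]
    exact mul_neg_of_pos_of_neg hq_pos <| sub_neg.mpr <|
      mul_sin_lt_mul_cosh_mul_cosh hsinh_pos.le hsinh_lt_b _ _ _
end

section
/- Let ρ > 0, ρ₀ := log √3, and define F_ρ on [0,1] piecewise by F_ρ(t) = e^{−2ρ} A(t) + e^{2ρ} B(t) for t ∈ [0, 2/3] and F_ρ(t) = e^{−2ρ} C(t) + e^{2ρ} D(t) for t ∈ [2/3, 1], with A, B, C, D as in Example 2.3. Then F_ρ attains a strictly positive value at some point of [0,1] if and only if ρ < ρ₀, and for ρ ∈ (0, ρ₀) the maximum of F_ρ over [0,1] equals (9 e^{−2ρ} − e^{2ρ})/(4π²), attained at t = 1. -/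
/-!
Write `u = e^{-2ρ}`, `v = e^{2ρ}`, `s = sin (πt/2)`, `c = cos (πt/2)`. Then `F_ρ(t) ≤ F_ρ(1)` on
`[0, 1]` because of the two identities
`(9u - v) - (u (8s³ + 3√3 c) - 3√3 v c) = 8u (1 - s³) + (v - u)(3√3 c - 1)` and
`(9u - v) - (9us - vs (9 - 8s²)) = (1 - s)(9u + v (8s² + 8s - 1))`,
whose right-hand sides are nonnegative since `u < v`, `c ≥ 1/2` on `[0, 2/3]` and `s ≥ 1/2` on
`[2/3, 1]`. So the maximum is `F_ρ(1) = (9u - v)/(4π²)`, positive iff `v² < 9` (as `uv = 1`), i.e.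
iff `ρ < log √3`.
-/

open Real Set

lemma first_piece_numerator_le {u v s c w : ℝ} (hu : 0 ≤ u) (huv : u ≤ v) (hs0 : 0 ≤ s) (hs1 : s ≤ 1)
    (hwc : 1 ≤ 3 * w * c) :
    u * (8 * s ^ 3 + 3 * w * c) - 3 * w * v * c ≤ 9 * u - v := by
  have hs3 : 0 ≤ u * (1 - s ^ 3) := mul_nonneg hu (sub_nonneg.2 (pow_le_one₀ hs0 hs1))
  have hvu : 0 ≤ (v - u) * (3 * w * c - 1) := mul_nonneg (sub_nonneg.2 huv) (sub_nonneg.2 hwc)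
  linear_combination 8 * hs3 + hvu

lemma second_piece_numerator_le {u v s : ℝ} (hu : 0 ≤ u) (hv : 0 ≤ v) (hs : 1 / 2 ≤ s) (hs1 : s ≤ 1) :
    9 * u * s - v * s * (9 - 8 * s ^ 2) ≤ 9 * u - v := by
  have hquad : 0 ≤ 9 * u + v * (8 * s ^ 2 + 8 * s - 1) :=
    add_nonneg (by positivity) (mul_nonneg hv (by nlinarith))
  linear_combination mul_nonneg (sub_nonneg.2 hs1) hquad

lemma half_le_cos_pi_mul_div_two {t : ℝ} (ht0 : 0 ≤ t) (ht : t ≤ 2 / 3) :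
    1 / 2 ≤ cos (π * t / 2) := by
  rw [← cos_pi_div_three]
  exact cos_le_cos_of_nonneg_of_le_pi (by positivity) (by linarith [pi_pos])
    (by nlinarith [pi_pos])

lemma half_le_sin_pi_mul_div_two {t : ℝ} (ht : 2 / 3 ≤ t) (ht1 : t ≤ 1) :
    1 / 2 ≤ sin (π * t / 2) := by
  rw [← sin_pi_div_six]
  exact sin_le_sin_of_le_of_le_pi_div_two (by linarith [pi_pos]) (by nlinarith [pi_pos])
    (by nlinarith [pi_pos])

lemma first_piece_le {u v t : ℝ} (hu : 0 ≤ u) (huv : u ≤ v) (ht0 : 0 ≤ t) (ht : t ≤ 2 / 3) :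
    u * (1 / (4 * π ^ 2) * (8 * sin (π * t / 2) ^ 3 + 3 * √3 * cos (π * t / 2))) +
        v * -(3 * √3 / (4 * π ^ 2) * cos (π * t / 2)) ≤ (9 * u - v) / (4 * π ^ 2) := by
  have hc := half_le_cos_pi_mul_div_two ht0 ht
  have hw : 1 ≤ √3 := one_le_sqrt.2 (by norm_num)
  have hs0 : 0 ≤ sin (π * t / 2) :=
    sin_nonneg_of_nonneg_of_le_pi (by positivity) (by nlinarith [pi_pos])
  calc _ = (u * (8 * sin (π * t / 2) ^ 3 + 3 * √3 * cos (π * t / 2)) -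
          3 * √3 * v * cos (π * t / 2)) / (4 * π ^ 2) := by ring
    _ ≤ _ := div_le_div_of_nonneg_right
      (first_piece_numerator_le hu huv hs0 (sin_le_one _) (by nlinarith)) (by positivity)

lemma second_piece_le {u v t : ℝ} (hu : 0 ≤ u) (hv : 0 ≤ v) (ht : 2 / 3 ≤ t) (ht1 : t ≤ 1) :
    u * (9 / (4 * π ^ 2) * sin (π * t / 2)) +
        v * -(1 / (4 * π ^ 2) * sin (π * t / 2) * (9 - 8 * sin (π * t / 2) ^ 2)) ≤
      (9 * u - v) / (4 * π ^ 2) := by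
  calc _ = (9 * u * sin (π * t / 2) - v * sin (π * t / 2) * (9 - 8 * sin (π * t / 2) ^ 2)) /
          (4 * π ^ 2) := by ring
    _ ≤ _ := div_le_div_of_nonneg_right
      (second_piece_numerator_le hu hv (half_le_sin_pi_mul_div_two ht ht1) (sin_le_one _)) (by positivity)

lemma nine_mul_exp_neg_sub_exp_pos_iff (ρ : ℝ) :
    0 < 9 * exp (-2 * ρ) - exp (2 * ρ) ↔ ρ < log √3 := by
  have hv := exp_pos (2 * ρ)
  have hsq : (9 * exp (-2 * ρ) - exp (2 * ρ)) * exp (2 * ρ) = 3 ^ 2 - exp (2 * ρ) ^ 2 := by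
    rw [sub_mul, mul_assoc, ← exp_add]
    simp only [neg_mul, neg_add_cancel, exp_zero]
    ring
  rw [← mul_pos_iff_of_pos_right hv, hsq, sub_pos, pow_lt_pow_iff_left₀ hv.le (by norm_num)
    two_ne_zero, log_sqrt (by norm_num), ← lt_log_iff_exp_lt (by norm_num)]
  constructor <;> intro h <;> linarith

theorem stmt_17 (ρ ρ₀ : ℝ) (hρ : 0 < ρ) (hρ₀ : ρ₀ = Real.log (Real.sqrt 3))
    (A B C D F : ℝ → ℝ)
    (hA : ∀ t, A t = (1 / (4 * π ^ 2)) * (8 * Real.sin (π * t / 2) ^ 3 + 3 * Real.sqrt 3 * Real.cos (π * t / 2)))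
    (hB : ∀ t, B t = -((3 * Real.sqrt 3 / (4 * π ^ 2)) * Real.cos (π * t / 2)))
    (hC : ∀ t, C t = (9 / (4 * π ^ 2)) * Real.sin (π * t / 2))
    (hD : ∀ t, D t = -((1 / (4 * π ^ 2)) * Real.sin (π * t / 2) * (9 - 8 * Real.sin (π * t / 2) ^ 2)))
    (hF : ∀ t, F t = if t ≤ 2 / 3 then Real.exp (-2 * ρ) * A t + Real.exp (2 * ρ) * B t
      else Real.exp (-2 * ρ) * C t + Real.exp (2 * ρ) * D t) :
    ((∃ t ∈ Icc (0:ℝ) 1, 0 < F t) ↔ ρ < ρ₀) ∧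
      (ρ < ρ₀ →
        IsGreatest (F '' Icc (0:ℝ) 1) ((9 * Real.exp (-2 * ρ) - Real.exp (2 * ρ)) / (4 * π ^ 2)) ∧
        F 1 = (9 * Real.exp (-2 * ρ) - Real.exp (2 * ρ)) / (4 * π ^ 2)) := by
  have huv : exp (-2 * ρ) ≤ exp (2 * ρ) := exp_le_exp.2 (by linarith)
  have hle : ∀ t ∈ Icc (0:ℝ) 1, F t ≤ (9 * exp (-2 * ρ) - exp (2 * ρ)) / (4 * π ^ 2) := by
    rintro t ⟨ht0, ht1⟩
    rw [hF, hA, hB, hC, hD]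
    split_ifs with ht
    · exact first_piece_le (exp_pos _).le huv ht0 ht
    · exact second_piece_le (exp_pos _).le (exp_pos _).le (not_le.1 ht).le ht1
  have hF1 : F 1 = (9 * exp (-2 * ρ) - exp (2 * ρ)) / (4 * π ^ 2) := by
    rw [hF, if_neg (by norm_num), hC, hD, mul_one, sin_pi_div_two]
    ring
  have hsign : 0 < (9 * exp (-2 * ρ) - exp (2 * ρ)) / (4 * π ^ 2) ↔ ρ < ρ₀ := by
    rw [hρ₀, div_pos_iff_of_pos_right (by positivity), nine_mul_exp_neg_sub_exp_pos_iff]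
  have h1 : (1:ℝ) ∈ Icc (0:ℝ) 1 := right_mem_Icc.2 zero_le_one
  refine ⟨⟨fun ⟨t, ht, hpos⟩ => hsign.1 (hpos.trans_le (hle t ht)),
    fun h => ⟨1, h1, hF1 ▸ hsign.2 h⟩⟩, fun _ => ⟨⟨⟨1, h1, hF1⟩, ?_⟩, hF1⟩⟩
  rintro _ ⟨t, ht, rfl⟩
  exact hle t ht
end
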